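/- arXiv:2502.10024 — 3 statements merged into one kernel-verified Lean document; each statement's English description precedes it below -/
import Mathlib

section
/- Let α > 1 and let (a_j)_{j ≥ -1} be a sequence of nonnegative reals such that A := sup_j a_j and B := sup_j (j+2)^α a_j are both finite and A > 0. Then ∑_{j ≥ -1} a_j ≤ C · A^{1-1/α} · B^{1/α}, where C > 0 is a constant depending only on α. -/
/-!
Since `a j ≤ min (A, B (j + 2) ^ (-α))`, split the sum at `N ≈ (B / A) ^ (1 / α)`: the first `N`
terms contribute at most `N A`, and comparing the tail with `∫_N^∞ x ^ (-α) dx` bounds it by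
`B N ^ (1 - α) / (α - 1)`. Both are of order `A ^ (1 - 1 / α) B ^ (1 / α)`. When `B < A`, replace
`A` by `min A B`, which the terms also satisfy since `(j + 2) ^ α ≥ 1`.
-/

open Finset Real

lemma sum_range_rpow_neg_le {α x : ℝ} (hα : 1 < α) (hx : 0 < x) (M : ℕ) :
    ∑ i ∈ range M, (x + ↑(i + 1)) ^ (-α) ≤ x ^ (1 - α) / (α - 1) := by
  have hanti : AntitoneOn (fun t : ℝ ↦ t ^ (-α)) (Set.Icc x (x + M)) :=
    (antitoneOn_rpow_Ioi_of_exponent_nonpos (by linarith)).mono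
      fun t ht ↦ hx.trans_le ht.1
  have hzero : (0 : ℝ) ∉ Set.uIcc x (x + M) := by
    rw [Set.uIcc_of_le (by simp)]
    exact fun h ↦ hx.not_ge h.1
  calc ∑ i ∈ range M, (x + ↑(i + 1)) ^ (-α)
      ≤ ∫ t in x..x + M, t ^ (-α) := hanti.sum_le_integral
    _ = (x ^ (1 - α) - (x + M) ^ (1 - α)) / (α - 1) := by
      rw [integral_rpow (Or.inr ⟨by linarith, hzero⟩), neg_add_eq_sub, ← neg_sub α 1,
        div_neg, ← neg_div, neg_sub]
    _ ≤ x ^ (1 - α) / (α - 1) := by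
      gcongr
      exact sub_le_self _ (by positivity)

lemma tsum_le_head_add_tail_of_rpow_mul_le {α A B : ℝ} (hα : 1 < α) {b : ℕ → ℝ} (hb0 : ∀ n, 0 ≤ b n)
    (hbA : ∀ n, b n ≤ A) (hbB : ∀ n : ℕ, ((n : ℝ) + 1) ^ α * b n ≤ B) {N : ℕ} (hN : 0 < N) :
    ∑' n, b n ≤ N * A + B * (N : ℝ) ^ (1 - α) / (α - 1) := by
  have hB : 0 ≤ B := (mul_nonneg (by positivity) (hb0 0)).trans (hbB 0)
  have hdecay (n : ℕ) : b (N + n) ≤ B * ((N : ℝ) + ↑(n + 1)) ^ (-α) := by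
    rw [rpow_neg (by positivity), ← div_eq_mul_inv, le_div_iff₀ (by positivity), mul_comm]
    simpa [add_assoc] using hbB (N + n)
  refine Real.tsum_le_of_sum_range_le hb0 fun M ↦ ?_
  calc ∑ n ∈ range M, b n
      ≤ ∑ n ∈ range (N + M), b n :=
        sum_le_sum_of_subset_of_nonneg (range_mono (by omega)) fun n _ _ ↦ hb0 n
    _ = ∑ n ∈ range N, b n + ∑ n ∈ range M, b (N + n) := sum_range_add b N M
    _ ≤ ∑ _n ∈ range N, A + ∑ n ∈ range M, B * ((N : ℝ) + ↑(n + 1)) ^ (-α) := by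
        gcongr with n _ n _
        exacts [hbA n, hdecay n]
    _ ≤ N * A + B * ((N : ℝ) ^ (1 - α) / (α - 1)) := by
        rw [sum_const, card_range, nsmul_eq_mul, ← mul_sum]
        gcongr
        exact sum_range_rpow_neg_le hα (by positivity) M
    _ = N * A + B * (N : ℝ) ^ (1 - α) / (α - 1) := by ring

theorem tsum_le_rpow_mul_rpow_of_rpow_mul_le {α A B : ℝ} (hα : 1 < α) (hA : 0 ≤ A)
    (hAB : A ≤ B) {b : ℕ → ℝ} (hb0 : ∀ n, 0 ≤ b n) (hbA : ∀ n, b n ≤ A)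
    (hbB : ∀ n : ℕ, ((n : ℝ) + 1) ^ α * b n ≤ B) :
    ∑' n, b n ≤ (2 + (α - 1)⁻¹) * A ^ (1 - 1 / α) * B ^ (1 / α) := by
  have hα0 : 0 < α := by linarith
  rcases hA.eq_or_lt with rfl | hA
  · have hb : b = 0 := funext fun n ↦ le_antisymm (hbA n) (hb0 n)
    rw [hb, zero_rpow (sub_pos.2 ((div_lt_one hα0).2 hα)).ne']
    simp
  have hB : 0 < B := hA.trans_le hAB
  set t := (B / A) ^ α⁻¹ with ht
  have ht1 : 1 ≤ t := one_le_rpow ((one_le_div hA).2 hAB) (by positivity)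
  have htα : t ^ α = B / A := rpow_inv_rpow (by positivity) hα0.ne'
  have hBt : B * t ^ (1 - α) = A * t := by
    rw [rpow_sub (by positivity), rpow_one, htα]
    field_simp
  have hAt : A * t = A ^ (1 - 1 / α) * B ^ (1 / α) := by
    rw [ht, div_rpow (by positivity) hA.le, rpow_sub hA, rpow_one, one_div]
    field_simp
  have htN : t ≤ ⌈t⌉₊ := Nat.le_ceil t
  have hNt : (⌈t⌉₊ : ℝ) ≤ 2 * t := by linarith [Nat.ceil_lt_add_one (zero_le_one.trans ht1)]
  calc ∑' n, b n ≤ ⌈t⌉₊ * A + B * (⌈t⌉₊ : ℝ) ^ (1 - α) / (α - 1) :=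
        tsum_le_head_add_tail_of_rpow_mul_le hα hb0 hbA hbB (Nat.ceil_pos.2 (by linarith))
    _ ≤ 2 * t * A + B * t ^ (1 - α) / (α - 1) := by
        gcongr ?_ * A + B * ?_ / _
        exact rpow_le_rpow_of_nonpos (by linarith) htN (by linarith)
    _ = (2 + (α - 1)⁻¹) * (A * t) := by rw [hBt]; ring
    _ = (2 + (α - 1)⁻¹) * A ^ (1 - 1 / α) * B ^ (1 / α) := by rw [hAt, mul_assoc]

lemma tsum_int_ge_neg_one_eq_tsum_nat (a : ℤ → ℝ) :
    ∑' j : {j : ℤ // -1 ≤ j}, a j = ∑' n : ℕ, a (n - 1) :=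
  let e : ℕ ≃ {j : ℤ // -1 ≤ j} :=
    { toFun := fun n ↦ ⟨(n : ℤ) - 1, by omega⟩
      invFun := fun j ↦ (j.1 + 1).toNat
      left_inv := fun n ↦ by simp
      right_inv := fun j ↦ Subtype.ext (by have := j.2; simp only; omega) }
  (e.tsum_eq fun j ↦ a j).symm

/-- Interpolation inequality for sequences: if a_j ≤ A and (j+2)^α a_j ≤ B for j ≥ -1,
then ∑_{j ≥ -1} a_j ≤ C A^{1-1/α} B^{1/α} with C depending only on α. -/
theorem stmt1 (α : ℝ) (hα : 1 < α) :
    ∃ C > (0 : ℝ), ∀ (a : ℤ → ℝ) (A B : ℝ),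
      (∀ j : ℤ, -1 ≤ j → 0 ≤ a j) → 0 < A →
      (∀ j : ℤ, -1 ≤ j → a j ≤ A) →
      (∀ j : ℤ, -1 ≤ j → ((j : ℝ) + 2) ^ α * a j ≤ B) →
      ∑' j : {j : ℤ // -1 ≤ j}, a j ≤ C * A ^ (1 - 1 / α) * B ^ (1 / α) := by
  have hα1 : 0 < α - 1 := sub_pos.2 hα
  refine ⟨2 + (α - 1)⁻¹, by positivity, fun a A B ha0 hA0 haA haB ↦ ?_⟩
  have hmem (n : ℕ) : -1 ≤ (n : ℤ) - 1 := by omega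
  have hb0 (n : ℕ) : 0 ≤ a (n - 1) := ha0 _ (hmem n)
  have hbB (n : ℕ) : ((n : ℝ) + 1) ^ α * a (n - 1) ≤ B := by
    convert haB _ (hmem n) using 3
    push_cast
    ring
  have hbB' (n : ℕ) : a (n - 1) ≤ B :=
    (le_mul_of_one_le_left (hb0 n) (one_le_rpow (by simp) (by linarith))).trans (hbB n)
  have hB0 : 0 ≤ B := (hb0 0).trans (hbB' 0)
  rw [tsum_int_ge_neg_one_eq_tsum_nat]
  calc ∑' n : ℕ, a (n - 1)
      ≤ (2 + (α - 1)⁻¹) * min A B ^ (1 - 1 / α) * B ^ (1 / α) :=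
        tsum_le_rpow_mul_rpow_of_rpow_mul_le hα (le_min hA0.le hB0) (min_le_right A B) hb0
          (fun n ↦ le_min (haA _ (hmem n)) (hbB' n)) hbB
    _ ≤ (2 + (α - 1)⁻¹) * A ^ (1 - 1 / α) * B ^ (1 / α) := by
        have hexp := sub_pos.2 ((div_lt_one (by linarith : (0 : ℝ) < α)).2 hα)
        gcongr
        exact min_le_left A B
end

section
/- Fix 0 ≤ α ≤ 3 log 2. Let (a_j)_{j ≥ -1} be a sequence of nonnegative reals with A := sup_j a_j finite and positive, and suppose there is D > 0 with a_j ≤ 2^{-j} D for all j ≥ 0. Then sup_{j ≥ -1} (j+2)^α a_j ≤ C · A · (1 + log(1 + D/A))^α for a universal constant C > 0. -/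
lemma aux1 (w : ℝ) (hw : 1 ≤ w) : 3 * Real.log w ≤ 2 * w := by
  rcases le_or_gt w 3 with h | h
  · have h1 := Real.log_le_sub_one_of_pos (by linarith : (0:ℝ) < w)
    linarith
  · have h3 : Real.log 3 ≤ 2 := by
      have := Real.log_le_sub_one_of_pos (by norm_num : (0:ℝ) < 3)
      linarith
    have hw3 : (0:ℝ) < w / 3 := by linarith
    have h1 := Real.log_le_sub_one_of_pos hw3
    have h2 : Real.log (w / 3) = Real.log w - Real.log 3 :=
      Real.log_div (by linarith) (by norm_num)
    linarith

lemma aux2 (α z : ℝ) (ha : 0 ≤ α) (ha2 : α ≤ 3 * Real.log 2) (hz : 0 ≤ z) :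
    (1 + z / 2) ^ α ≤ 4 * (2 : ℝ) ^ z := by
  have hw : (1:ℝ) ≤ 1 + z / 2 := by linarith
  have hlog2 : 0 < Real.log 2 := Real.log_pos one_lt_two
  have h1 : (1 + z / 2) ^ α ≤ (1 + z / 2) ^ (3 * Real.log 2) :=
    Real.rpow_le_rpow_of_exponent_le hw ha2
  have h2 : (1 + z / 2) ^ (3 * Real.log 2)
      = Real.exp (Real.log (1 + z / 2) * (3 * Real.log 2)) := by
    rw [Real.rpow_def_of_pos (by linarith)]
  have h3 : 3 * Real.log (1 + z / 2) ≤ 2 + z := by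
    have := aux1 (1 + z / 2) hw
    linarith
  have h4 : Real.log (1 + z / 2) * (3 * Real.log 2) ≤ Real.log 2 * (2 + z) := by
    nlinarith [hlog2.le]
  have h5 : Real.exp (Real.log 2 * (2 + z)) = 4 * (2:ℝ) ^ z := by
    have e4 : Real.exp (2 * Real.log 2) = 4 := by
      rw [show (2:ℝ) * Real.log 2 = Real.log 4 by
        rw [show (4:ℝ) = 2 ^ (2:ℕ) by norm_num, Real.log_pow]; push_cast; ring]
      exact Real.exp_log (by norm_num)
    rw [Real.rpow_def_of_pos (by norm_num : (0:ℝ) < 2), ← e4, ← Real.exp_add]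
    ring_nf
  calc (1 + z / 2) ^ α ≤ Real.exp (Real.log (1 + z / 2) * (3 * Real.log 2)) := by
        rw [← h2]; exact h1
    _ ≤ Real.exp (Real.log 2 * (2 + z)) := Real.exp_le_exp.mpr h4
    _ = 4 * (2:ℝ) ^ z := h5

/-- Discrete logarithmic interpolation: for 0 ≤ α ≤ 3 log 2, a_j ≤ A for j ≥ -1 and
a_j ≤ 2^{-j} D for j ≥ 0 imply sup_{j ≥ -1} (j+2)^α a_j ≤ C A (1 + log(1 + D/A))^α. -/
theorem stmt2 :
    ∃ C > (0 : ℝ), ∀ (α : ℝ), 0 ≤ α → α ≤ 3 * Real.log 2 →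
      ∀ (a : ℤ → ℝ) (A D : ℝ),
        (∀ j : ℤ, -1 ≤ j → 0 ≤ a j) → 0 < A → (∀ j : ℤ, -1 ≤ j → a j ≤ A) →
        0 < D → (∀ j : ℤ, 0 ≤ j → a j ≤ (2 : ℝ) ^ (-(j : ℝ)) * D) →
        ∀ j : ℤ, -1 ≤ j →
          ((j : ℝ) + 2) ^ α * a j ≤ C * A * (1 + Real.log (1 + D / A)) ^ α := by
  have hlog2 : 0 < Real.log 2 := Real.log_pos one_lt_two
  have hlog2' : Real.log 2 ≤ 1 := by
    have := Real.log_le_sub_one_of_pos (by norm_num : (0:ℝ) < 2); linarith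
  set c : ℝ := 2 / Real.log 2 with hc
  have hc2 : 2 ≤ c := by
    rw [hc, le_div_iff₀ hlog2]; nlinarith
  have hc0 : 0 < c := by linarith
  refine ⟨4 * c ^ (3 * Real.log 2), by positivity, ?_⟩
  intro α hα hα2 a A D ha0 hA haA hD haD j hj
  set L : ℝ := 1 + Real.log (1 + D / A) with hLdef
  have hDA : 0 < D / A := div_pos hD hA
  have hL1 : (1:ℝ) ≤ L := by
    have : 0 ≤ Real.log (1 + D / A) := Real.log_nonneg (by linarith)
    rw [hLdef]; linarith
  set M : ℝ := Real.logb 2 (1 + D / A) with hM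
  have hM0 : 0 ≤ M := Real.logb_nonneg one_lt_two (by linarith)
  have h2M : (2:ℝ) ^ M = 1 + D / A :=
    Real.rpow_logb (by norm_num) (by norm_num) (by linarith)
  have hML : Real.log (1 + D / A) = M * Real.log 2 := by
    rw [hM, Real.logb]; field_simp
  have hcL : M + 2 ≤ c * L := by
    have h1 : c * L = 2 / Real.log 2 + 2 * M := by
      rw [hc, hLdef, hML]; field_simp
    have : (2:ℝ) ≤ 2 / Real.log 2 := hc2
    rw [h1]; linarith
  have hcL2 : (2:ℝ) ≤ c * L := by nlinarith
  have hcpow : c ^ α ≤ c ^ (3 * Real.log 2) :=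
    Real.rpow_le_rpow_of_exponent_le (by linarith) hα2
  have hLαpos : (0:ℝ) < L ^ α := Real.rpow_pos_of_pos (by linarith) α
  have hcp : (0:ℝ) < c ^ (3 * Real.log 2) := Real.rpow_pos_of_pos hc0 _
  have hj2 : (1:ℝ) ≤ (j:ℝ) + 2 := by
    have : (-1:ℝ) ≤ (j:ℝ) := by exact_mod_cast hj
    linarith
  have hclα : (c * L) ^ α ≤ c ^ (3 * Real.log 2) * L ^ α := by
    rw [Real.mul_rpow hc0.le (by linarith)]
    exact mul_le_mul_of_nonneg_right hcpow hLαpos.le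
  clear_value c L M
  by_cases hcase : (j:ℝ) ≤ M
  · -- low frequencies: use a j ≤ A
    have h1 : ((j:ℝ) + 2) ^ α ≤ (c * L) ^ α :=
      Real.rpow_le_rpow (by linarith) (by linarith) hα
    have h1' : ((j:ℝ) + 2) ^ α ≤ c ^ (3 * Real.log 2) * L ^ α := h1.trans hclα
    calc ((j:ℝ) + 2) ^ α * a j
        ≤ (c ^ (3 * Real.log 2) * L ^ α) * A :=
          mul_le_mul h1' (haA j hj) (ha0 j hj) (by positivity)
      _ = c ^ (3 * Real.log 2) * A * L ^ α := by ring
      _ ≤ 4 * c ^ (3 * Real.log 2) * A * L ^ α := by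
          nlinarith [mul_nonneg (mul_nonneg hcp.le hA.le) hLαpos.le]
  · -- high frequencies: use a j ≤ 2^{-j} D
    push_neg at hcase
    have hj0 : 0 ≤ j := by
      have : (0:ℝ) < (j:ℝ) := lt_of_le_of_lt hM0 hcase
      exact_mod_cast this.le
    set z : ℝ := (j:ℝ) - M with hz
    clear_value z
    have hz0 : 0 < z := by rw [hz]; linarith
    -- 2^{-j} D ≤ 2^{-z} A
    have key1 : (2:ℝ) ^ (-(j:ℝ)) * D ≤ (2:ℝ) ^ (-z) * A := by
      have e1 : (2:ℝ) ^ (-(j:ℝ)) = (2:ℝ) ^ (-z) * (2:ℝ) ^ (-M) := by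
        rw [← Real.rpow_add (by norm_num : (0:ℝ) < 2)]
        congr 1; rw [hz]; ring
      have e2 : (2:ℝ) ^ (-M) * D ≤ A := by
        rw [Real.rpow_neg (by norm_num : (0:ℝ) ≤ 2), h2M]
        rw [inv_mul_le_iff₀ (by linarith : (0:ℝ) < 1 + D / A)]
        have : A * (1 + D / A) = A + D := by field_simp
        linarith
      calc (2:ℝ) ^ (-(j:ℝ)) * D = (2:ℝ) ^ (-z) * ((2:ℝ) ^ (-M) * D) := by
            rw [e1]; ring
        _ ≤ (2:ℝ) ^ (-z) * A := by
            apply mul_le_mul_of_nonneg_left e2 (Real.rpow_nonneg (by norm_num) _)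
    -- (j+2)^α ≤ (cL)^α (1+z/2)^α
    have key2 : ((j:ℝ) + 2) ^ α ≤ (c * L) ^ α * (1 + z / 2) ^ α := by
      have hb : (j:ℝ) + 2 ≤ c * L * (1 + z / 2) := by
        have h0 : (j:ℝ) + 2 = z + (M + 2) := by rw [hz]; ring
        have hh : 0 ≤ (c * L - 2) * z := mul_nonneg (by linarith) hz0.le
        have he : c * L * (1 + z / 2) = c * L + ((c * L - 2) * z) / 2 + z := by ring
        linarith
      calc ((j:ℝ) + 2) ^ α ≤ (c * L * (1 + z / 2)) ^ α :=
            Real.rpow_le_rpow (by linarith) hb hα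
        _ = (c * L) ^ α * (1 + z / 2) ^ α :=
            Real.mul_rpow (by linarith) (by linarith)
    have key3 : (1 + z / 2) ^ α ≤ 4 * (2:ℝ) ^ z := aux2 α z hα hα2 hz0.le
    have hzz : (2:ℝ) ^ z * (2:ℝ) ^ (-z) = 1 := by
      rw [← Real.rpow_add (by norm_num : (0:ℝ) < 2)]; simp
    have haj := haD j hj0
    have hpos1 : (0:ℝ) ≤ ((j:ℝ) + 2) ^ α := Real.rpow_nonneg (by linarith) _
    have hpos2 : (0:ℝ) ≤ (2:ℝ) ^ (-z) * A := by positivity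
    have hpos3 : (0:ℝ) < (c * L) ^ α := Real.rpow_pos_of_pos (by linarith) _
    calc ((j:ℝ) + 2) ^ α * a j
        ≤ ((j:ℝ) + 2) ^ α * ((2:ℝ) ^ (-(j:ℝ)) * D) :=
          mul_le_mul_of_nonneg_left haj hpos1
      _ ≤ ((j:ℝ) + 2) ^ α * ((2:ℝ) ^ (-z) * A) :=
          mul_le_mul_of_nonneg_left key1 hpos1
      _ ≤ ((c * L) ^ α * (1 + z / 2) ^ α) * ((2:ℝ) ^ (-z) * A) :=
          mul_le_mul_of_nonneg_right key2 hpos2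
      _ ≤ ((c * L) ^ α * (4 * (2:ℝ) ^ z)) * ((2:ℝ) ^ (-z) * A) := by
          apply mul_le_mul_of_nonneg_right _ hpos2
          exact mul_le_mul_of_nonneg_left key3 hpos3.le
      _ = 4 * (c * L) ^ α * A * ((2:ℝ) ^ z * (2:ℝ) ^ (-z)) := by ring
      _ = 4 * (c * L) ^ α * A := by rw [hzz, mul_one]
      _ = (c * L) ^ α * (4 * A) := by ring
      _ ≤ c ^ (3 * Real.log 2) * L ^ α * (4 * A) :=
          mul_le_mul_of_nonneg_right hclα (by positivity)
      _ = 4 * c ^ (3 * Real.log 2) * A * L ^ α := by ring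
end

section
/- Let ρ, u, Π be C² fields on ℝ₊ × ℝ², with u ℝ²-valued, satisfying ∂_t ρ + u·∇ρ = 0, ρ(∂_t u + u·∇u) + ∇Π = 0 and div u = 0, with ρ > 0. Define the momentum m := ρu and η := curl m = ∂₁m² − ∂₂m¹, and X := ∇^⊥ρ. Then η satisfies the transport equation ∂_t η + u·∇η = ∂_X u · u, with right-hand side equal to (1/2)∂_X|u|². -/
/-!
Write `D_t = ∂_t + u·∇` for the material derivative. Mass transport `D_t ρ = 0` turns the
momentum equation into `D_t mᵢ = -∂ᵢΠ` for the momentum `m = ρu`. Differentiating,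
`∂ⱼ(D_t f) = D_t(∂ⱼ f) + ∂ⱼu·∇f`, so in the curl `η = ∂₁m₂ - ∂₂m₁` the pressure cancels by the
symmetry of second derivatives and `D_t η = ∂₂u·∇m₁ - ∂₁u·∇m₂`. Expanding `m = ρu`, everything
except `∂_X u · u` carries a factor `div u = 0`.
-/

/-- Time derivative ∂_t. -/
noncomputable def pt (f : ℝ → ℝ → ℝ → ℝ) (t x y : ℝ) : ℝ := deriv (fun s => f s x y) t
/-- Spatial derivative ∂₁. -/
noncomputable def p1 (f : ℝ → ℝ → ℝ → ℝ) (t x y : ℝ) : ℝ := deriv (fun s => f t s y) x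
/-- Spatial derivative ∂₂. -/
noncomputable def p2 (f : ℝ → ℝ → ℝ → ℝ) (t x y : ℝ) : ℝ := deriv (fun s => f t x s) y

def uncurry3 (f : ℝ → ℝ → ℝ → ℝ) : ℝ × ℝ × ℝ → ℝ := fun p => f p.1 p.2.1 p.2.2

theorem fderiv_fderiv_apply_comm {E : Type*} [NormedAddCommGroup E] [NormedSpace ℝ E]
    {F : E → ℝ} (hF : ContDiff ℝ 2 F) (p v w : E) :
    fderiv ℝ (fun q => fderiv ℝ F q v) p w = fderiv ℝ (fun q => fderiv ℝ F q w) p v := by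
  have hdiff : DifferentiableAt ℝ (fderiv ℝ F) p :=
    (hF.fderiv_right (m := 1) le_rfl).differentiable one_ne_zero p
  rw [fderiv_clm_apply hdiff (differentiableAt_const v),
    fderiv_clm_apply hdiff (differentiableAt_const w)]
  simpa using hF.contDiffAt.isSymmSndFDerivAt (by simp) w v

theorem differentiable_fderiv_apply {E : Type*} [NormedAddCommGroup E] [NormedSpace ℝ E]
    {F : E → ℝ} (hF : ContDiff ℝ 2 F) (v : E) :
    Differentiable ℝ (fun q => fderiv ℝ F q v) :=
  ((hF.fderiv_right (m := 1) le_rfl).clm_apply contDiff_const).differentiable one_ne_zero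

section
variable {f : ℝ → ℝ → ℝ → ℝ} {t x y : ℝ}

theorem hasDerivAt_fderiv_t (hf : DifferentiableAt ℝ (uncurry3 f) (t, x, y)) :
    HasDerivAt (fun s => f s x y) (fderiv ℝ (uncurry3 f) (t, x, y) (1, 0, 0)) t :=
  hf.hasFDerivAt.comp_hasDerivAt (f := fun s : ℝ => ((s, x, y) : ℝ × ℝ × ℝ)) t
    ((hasDerivAt_id t).prodMk (hasDerivAt_const t (x, y)))

theorem hasDerivAt_fderiv_x (hf : DifferentiableAt ℝ (uncurry3 f) (t, x, y)) :
    HasDerivAt (fun s => f t s y) (fderiv ℝ (uncurry3 f) (t, x, y) (0, 1, 0)) x :=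
  hf.hasFDerivAt.comp_hasDerivAt (f := fun s : ℝ => ((t, s, y) : ℝ × ℝ × ℝ)) x
    ((hasDerivAt_const x t).prodMk ((hasDerivAt_id x).prodMk (hasDerivAt_const x y)))

theorem hasDerivAt_fderiv_y (hf : DifferentiableAt ℝ (uncurry3 f) (t, x, y)) :
    HasDerivAt (fun s => f t x s) (fderiv ℝ (uncurry3 f) (t, x, y) (0, 0, 1)) y :=
  hf.hasFDerivAt.comp_hasDerivAt (f := fun s : ℝ => ((t, x, s) : ℝ × ℝ × ℝ)) y
    ((hasDerivAt_const y t).prodMk ((hasDerivAt_const y x).prodMk (hasDerivAt_id y)))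

theorem pt_eq_fderiv (hf : DifferentiableAt ℝ (uncurry3 f) (t, x, y)) :
    pt f t x y = fderiv ℝ (uncurry3 f) (t, x, y) (1, 0, 0) :=
  (hasDerivAt_fderiv_t hf).deriv

theorem p1_eq_fderiv (hf : DifferentiableAt ℝ (uncurry3 f) (t, x, y)) :
    p1 f t x y = fderiv ℝ (uncurry3 f) (t, x, y) (0, 1, 0) :=
  (hasDerivAt_fderiv_x hf).deriv

theorem p2_eq_fderiv (hf : DifferentiableAt ℝ (uncurry3 f) (t, x, y)) :
    p2 f t x y = fderiv ℝ (uncurry3 f) (t, x, y) (0, 0, 1) :=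
  (hasDerivAt_fderiv_y hf).deriv

theorem hasDerivAt_pt (hf : DifferentiableAt ℝ (uncurry3 f) (t, x, y)) :
    HasDerivAt (fun s => f s x y) (pt f t x y) t :=
  (hasDerivAt_fderiv_t hf).differentiableAt.hasDerivAt

theorem hasDerivAt_p1 (hf : DifferentiableAt ℝ (uncurry3 f) (t, x, y)) :
    HasDerivAt (fun s => f t s y) (p1 f t x y) x :=
  (hasDerivAt_fderiv_x hf).differentiableAt.hasDerivAt

theorem hasDerivAt_p2 (hf : DifferentiableAt ℝ (uncurry3 f) (t, x, y)) :
    HasDerivAt (fun s => f t x s) (p2 f t x y) y :=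
  (hasDerivAt_fderiv_y hf).differentiableAt.hasDerivAt

end

section
variable {f : ℝ → ℝ → ℝ → ℝ}

theorem uncurry3_pt (hf : Differentiable ℝ (uncurry3 f)) :
    uncurry3 (pt f) = fun q => fderiv ℝ (uncurry3 f) q (1, 0, 0) :=
  funext fun _ => pt_eq_fderiv (hf _)

theorem uncurry3_p1 (hf : Differentiable ℝ (uncurry3 f)) :
    uncurry3 (p1 f) = fun q => fderiv ℝ (uncurry3 f) q (0, 1, 0) :=
  funext fun _ => p1_eq_fderiv (hf _)

theorem uncurry3_p2 (hf : Differentiable ℝ (uncurry3 f)) :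
    uncurry3 (p2 f) = fun q => fderiv ℝ (uncurry3 f) q (0, 0, 1) :=
  funext fun _ => p2_eq_fderiv (hf _)

theorem differentiable_pt (hf : ContDiff ℝ 2 (uncurry3 f)) :
    Differentiable ℝ (uncurry3 (pt f)) := by
  rw [uncurry3_pt (hf.differentiable two_ne_zero)]
  exact differentiable_fderiv_apply hf _

theorem differentiable_p1 (hf : ContDiff ℝ 2 (uncurry3 f)) :
    Differentiable ℝ (uncurry3 (p1 f)) := by
  rw [uncurry3_p1 (hf.differentiable two_ne_zero)]
  exact differentiable_fderiv_apply hf _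

theorem differentiable_p2 (hf : ContDiff ℝ 2 (uncurry3 f)) :
    Differentiable ℝ (uncurry3 (p2 f)) := by
  rw [uncurry3_p2 (hf.differentiable two_ne_zero)]
  exact differentiable_fderiv_apply hf _

theorem p1_pt_comm (hf : ContDiff ℝ 2 (uncurry3 f)) (t x y : ℝ) :
    p1 (pt f) t x y = pt (p1 f) t x y := by
  have hf1 := hf.differentiable two_ne_zero
  rw [p1_eq_fderiv (differentiable_pt hf _), pt_eq_fderiv (differentiable_p1 hf _),
    uncurry3_pt hf1, uncurry3_p1 hf1, fderiv_fderiv_apply_comm hf]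

theorem p2_pt_comm (hf : ContDiff ℝ 2 (uncurry3 f)) (t x y : ℝ) :
    p2 (pt f) t x y = pt (p2 f) t x y := by
  have hf1 := hf.differentiable two_ne_zero
  rw [p2_eq_fderiv (differentiable_pt hf _), pt_eq_fderiv (differentiable_p2 hf _),
    uncurry3_pt hf1, uncurry3_p2 hf1, fderiv_fderiv_apply_comm hf]

theorem p1_p2_comm (hf : ContDiff ℝ 2 (uncurry3 f)) (t x y : ℝ) :
    p1 (p2 f) t x y = p2 (p1 f) t x y := by
  have hf1 := hf.differentiable two_ne_zero
  rw [p1_eq_fderiv (differentiable_p2 hf _), p2_eq_fderiv (differentiable_p1 hf _),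
    uncurry3_p2 hf1, uncurry3_p1 hf1, fderiv_fderiv_apply_comm hf]

end

noncomputable def materialDeriv (u1 u2 f : ℝ → ℝ → ℝ → ℝ) (t x y : ℝ) : ℝ :=
  pt f t x y + u1 t x y * p1 f t x y + u2 t x y * p2 f t x y

section
variable {u1 u2 f g : ℝ → ℝ → ℝ → ℝ} {t x y : ℝ}

theorem p1_mul (hf : DifferentiableAt ℝ (uncurry3 f) (t, x, y))
    (hg : DifferentiableAt ℝ (uncurry3 g) (t, x, y)) :
    p1 (fun t x y => f t x y * g t x y) t x y = p1 f t x y * g t x y + f t x y * p1 g t x y :=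
  ((hasDerivAt_p1 hf).mul (hasDerivAt_p1 hg)).deriv

theorem p2_mul (hf : DifferentiableAt ℝ (uncurry3 f) (t, x, y))
    (hg : DifferentiableAt ℝ (uncurry3 g) (t, x, y)) :
    p2 (fun t x y => f t x y * g t x y) t x y = p2 f t x y * g t x y + f t x y * p2 g t x y :=
  ((hasDerivAt_p2 hf).mul (hasDerivAt_p2 hg)).deriv

theorem p1_sq_add_sq (hf : DifferentiableAt ℝ (uncurry3 f) (t, x, y))
    (hg : DifferentiableAt ℝ (uncurry3 g) (t, x, y)) :
    p1 (fun t x y => f t x y ^ 2 + g t x y ^ 2) t x y =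
      2 * (f t x y * p1 f t x y + g t x y * p1 g t x y) := by
  refine (((hasDerivAt_p1 hf).fun_pow 2).add ((hasDerivAt_p1 hg).fun_pow 2)).deriv.trans ?_
  ring

theorem p2_sq_add_sq (hf : DifferentiableAt ℝ (uncurry3 f) (t, x, y))
    (hg : DifferentiableAt ℝ (uncurry3 g) (t, x, y)) :
    p2 (fun t x y => f t x y ^ 2 + g t x y ^ 2) t x y =
      2 * (f t x y * p2 f t x y + g t x y * p2 g t x y) := by
  refine (((hasDerivAt_p2 hf).fun_pow 2).add ((hasDerivAt_p2 hg).fun_pow 2)).deriv.trans ?_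
  ring

theorem materialDeriv_mul (hf : DifferentiableAt ℝ (uncurry3 f) (t, x, y))
    (hg : DifferentiableAt ℝ (uncurry3 g) (t, x, y)) :
    materialDeriv u1 u2 (fun t x y => f t x y * g t x y) t x y =
      materialDeriv u1 u2 f t x y * g t x y + f t x y * materialDeriv u1 u2 g t x y := by
  have hpt : pt (fun t x y => f t x y * g t x y) t x y =
      pt f t x y * g t x y + f t x y * pt g t x y :=
    ((hasDerivAt_pt hf).mul (hasDerivAt_pt hg)).deriv
  simp only [materialDeriv, hpt, p1_mul hf hg, p2_mul hf hg]
  ring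

theorem materialDeriv_sub (hf : DifferentiableAt ℝ (uncurry3 f) (t, x, y))
    (hg : DifferentiableAt ℝ (uncurry3 g) (t, x, y)) :
    materialDeriv u1 u2 (fun t x y => f t x y - g t x y) t x y =
      materialDeriv u1 u2 f t x y - materialDeriv u1 u2 g t x y := by
  have hpt : pt (fun t x y => f t x y - g t x y) t x y = pt f t x y - pt g t x y :=
    ((hasDerivAt_pt hf).sub (hasDerivAt_pt hg)).deriv
  have hp1 : p1 (fun t x y => f t x y - g t x y) t x y = p1 f t x y - p1 g t x y :=
    ((hasDerivAt_p1 hf).sub (hasDerivAt_p1 hg)).deriv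
  have hp2 : p2 (fun t x y => f t x y - g t x y) t x y = p2 f t x y - p2 g t x y :=
    ((hasDerivAt_p2 hf).sub (hasDerivAt_p2 hg)).deriv
  simp only [materialDeriv, hpt, hp1, hp2]
  ring

theorem p1_materialDeriv (hf : ContDiff ℝ 2 (uncurry3 f))
    (hu1 : DifferentiableAt ℝ (uncurry3 u1) (t, x, y))
    (hu2 : DifferentiableAt ℝ (uncurry3 u2) (t, x, y)) :
    p1 (materialDeriv u1 u2 f) t x y = materialDeriv u1 u2 (p1 f) t x y
      + p1 u1 t x y * p1 f t x y + p1 u2 t x y * p2 f t x y := by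
  have h := ((hasDerivAt_p1 (differentiable_pt hf (t, x, y))).add
    ((hasDerivAt_p1 hu1).mul (hasDerivAt_p1 (differentiable_p1 hf (t, x, y))))).add
    ((hasDerivAt_p1 hu2).mul (hasDerivAt_p1 (differentiable_p2 hf (t, x, y))))
  rw [show p1 (materialDeriv u1 u2 f) t x y = _ from h.deriv, p1_pt_comm hf, p1_p2_comm hf]
  simp only [materialDeriv]
  ring

theorem p2_materialDeriv (hf : ContDiff ℝ 2 (uncurry3 f))
    (hu1 : DifferentiableAt ℝ (uncurry3 u1) (t, x, y))
    (hu2 : DifferentiableAt ℝ (uncurry3 u2) (t, x, y)) :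
    p2 (materialDeriv u1 u2 f) t x y = materialDeriv u1 u2 (p2 f) t x y
      + p2 u1 t x y * p1 f t x y + p2 u2 t x y * p2 f t x y := by
  have h := ((hasDerivAt_p2 (differentiable_pt hf (t, x, y))).add
    ((hasDerivAt_p2 hu1).mul (hasDerivAt_p2 (differentiable_p1 hf (t, x, y))))).add
    ((hasDerivAt_p2 hu2).mul (hasDerivAt_p2 (differentiable_p2 hf (t, x, y))))
  rw [show p2 (materialDeriv u1 u2 f) t x y = _ from h.deriv, p2_pt_comm hf, ← p1_p2_comm hf]
  simp only [materialDeriv]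
  ring

end

theorem materialDeriv_mul_eq_of_transport {ρ w u1 u2 q : ℝ → ℝ → ℝ → ℝ}
    (hρ : Differentiable ℝ (uncurry3 ρ)) (hw : Differentiable ℝ (uncurry3 w))
    (htrans : ∀ t x y, materialDeriv u1 u2 ρ t x y = 0)
    (hmom : ∀ t x y, ρ t x y * materialDeriv u1 u2 w t x y + q t x y = 0) :
    materialDeriv u1 u2 (fun t x y => ρ t x y * w t x y) = fun t x y => -q t x y := by
  funext t x y
  rw [materialDeriv_mul (hρ _) (hw _)]
  linear_combination w t x y * htrans t x y + hmom t x y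

/-- The pressure drops out of the curl because `∂₁∂₂P = ∂₂∂₁P`. -/
theorem materialDeriv_curl {u1 u2 f g P : ℝ → ℝ → ℝ → ℝ} (hf : ContDiff ℝ 2 (uncurry3 f))
    (hg : ContDiff ℝ 2 (uncurry3 g)) (hP : ContDiff ℝ 2 (uncurry3 P))
    (hu1 : Differentiable ℝ (uncurry3 u1)) (hu2 : Differentiable ℝ (uncurry3 u2))
    (hfP : materialDeriv u1 u2 f = fun t x y => -p1 P t x y)
    (hgP : materialDeriv u1 u2 g = fun t x y => -p2 P t x y) (t x y : ℝ) :
    materialDeriv u1 u2 (fun t x y => p1 g t x y - p2 f t x y) t x y =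
      p2 u1 t x y * p1 f t x y + p2 u2 t x y * p2 f t x y
        - (p1 u1 t x y * p1 g t x y + p1 u2 t x y * p2 g t x y) := by
  have hg1 := p1_materialDeriv (t := t) (x := x) (y := y) hg (hu1 _) (hu2 _)
  have hf2 := p2_materialDeriv (t := t) (x := x) (y := y) hf (hu1 _) (hu2 _)
  have hP1 : p1 (fun t x y => -p2 P t x y) t x y = -p2 (p1 P) t x y := by
    rw [← p1_p2_comm hP]
    exact (hasDerivAt_p1 (differentiable_p2 hP _)).neg.deriv
  have hP2 : p2 (fun t x y => -p1 P t x y) t x y = -p2 (p1 P) t x y :=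
    (hasDerivAt_p2 (differentiable_p1 hP _)).neg.deriv
  rw [hgP, hP1] at hg1
  rw [hfP, hP2] at hf2
  rw [materialDeriv_sub (differentiable_p1 hg _) (differentiable_p2 hf _)]
  linear_combination hf2 - hg1

theorem stmt11_general (ρ u1 u2 Pr : ℝ → ℝ → ℝ → ℝ)
    (hρ : ContDiff ℝ 2 (fun p : ℝ × ℝ × ℝ => ρ p.1 p.2.1 p.2.2))
    (hu1 : ContDiff ℝ 2 (fun p : ℝ × ℝ × ℝ => u1 p.1 p.2.1 p.2.2))
    (hu2 : ContDiff ℝ 2 (fun p : ℝ × ℝ × ℝ => u2 p.1 p.2.1 p.2.2))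
    (hPr : ContDiff ℝ 2 (fun p : ℝ × ℝ × ℝ => Pr p.1 p.2.1 p.2.2))
    (htransρ : ∀ t x y,
      pt ρ t x y + u1 t x y * p1 ρ t x y + u2 t x y * p2 ρ t x y = 0)
    (hmom1 : ∀ t x y,
      ρ t x y * (pt u1 t x y + u1 t x y * p1 u1 t x y + u2 t x y * p2 u1 t x y)
        + p1 Pr t x y = 0)
    (hmom2 : ∀ t x y,
      ρ t x y * (pt u2 t x y + u1 t x y * p1 u2 t x y + u2 t x y * p2 u2 t x y)
        + p2 Pr t x y = 0)
    (hdiv : ∀ t x y, p1 u1 t x y + p2 u2 t x y = 0)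
    (η : ℝ → ℝ → ℝ → ℝ)
    (hη : ∀ t x y, η t x y =
      p1 (fun t x y => ρ t x y * u2 t x y) t x y -
      p2 (fun t x y => ρ t x y * u1 t x y) t x y)
    (X1 X2 : ℝ → ℝ → ℝ → ℝ)
    (hX1 : ∀ t x y, X1 t x y = -(p2 ρ t x y))
    (hX2 : ∀ t x y, X2 t x y = p1 ρ t x y) :
    ∀ t x y, 0 ≤ t →
      (pt η t x y + u1 t x y * p1 η t x y + u2 t x y * p2 η t x y =
        (X1 t x y * p1 u1 t x y + X2 t x y * p2 u1 t x y) * u1 t x y +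
        (X1 t x y * p1 u2 t x y + X2 t x y * p2 u2 t x y) * u2 t x y) ∧
      ((X1 t x y * p1 u1 t x y + X2 t x y * p2 u1 t x y) * u1 t x y +
        (X1 t x y * p1 u2 t x y + X2 t x y * p2 u2 t x y) * u2 t x y =
        (1 / 2) *
          (X1 t x y * p1 (fun t a b => (u1 t a b) ^ 2 + (u2 t a b) ^ 2) t x y +
            X2 t x y * p2 (fun t a b => (u1 t a b) ^ 2 + (u2 t a b) ^ 2) t x y)) := by
  have hρd : Differentiable ℝ (uncurry3 ρ) := hρ.differentiable two_ne_zero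
  have hu1d : Differentiable ℝ (uncurry3 u1) := hu1.differentiable two_ne_zero
  have hu2d : Differentiable ℝ (uncurry3 u2) := hu2.differentiable two_ne_zero
  obtain rfl : η = fun t x y => p1 (fun t x y => ρ t x y * u2 t x y) t x y -
      p2 (fun t x y => ρ t x y * u1 t x y) t x y := funext₃ hη
  have hm1 : ContDiff ℝ 2 (uncurry3 fun t x y => ρ t x y * u1 t x y) := hρ.mul hu1
  have hm2 : ContDiff ℝ 2 (uncurry3 fun t x y => ρ t x y * u2 t x y) := hρ.mul hu2
  have hcurl := materialDeriv_curl hm1 hm2 hPr hu1d hu2d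
    (materialDeriv_mul_eq_of_transport hρd hu1d htransρ hmom1)
    (materialDeriv_mul_eq_of_transport hρd hu2d htransρ hmom2)
  intro t x y _
  refine ⟨?_, ?_⟩
  · change materialDeriv u1 u2 _ t x y = _
    rw [hcurl, p1_mul (hρd _) (hu1d _), p2_mul (hρd _) (hu1d _), p1_mul (hρd _) (hu2d _),
      p2_mul (hρd _) (hu2d _), hX1, hX2]
    linear_combination (ρ t x y * (p2 u1 t x y - p1 u2 t x y) + p2 ρ t x y * u1 t x y
      - p1 ρ t x y * u2 t x y) * hdiv t x y
  · rw [p1_sq_add_sq (hu1d _) (hu2d _), p2_sq_add_sq (hu1d _) (hu2d _)]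
    ring

/-- For the non-homogeneous incompressible Euler system in 2-D, the curl η of the
momentum m = ρu satisfies ∂_t η + u·∇η = ∂_X u · u = ½ ∂_X |u|², with X = ∇^⊥ρ. -/
theorem stmt11 (ρ u1 u2 Pr : ℝ → ℝ → ℝ → ℝ)
    (hρ : ContDiff ℝ 2 (fun p : ℝ × ℝ × ℝ => ρ p.1 p.2.1 p.2.2))
    (hu1 : ContDiff ℝ 2 (fun p : ℝ × ℝ × ℝ => u1 p.1 p.2.1 p.2.2))
    (hu2 : ContDiff ℝ 2 (fun p : ℝ × ℝ × ℝ => u2 p.1 p.2.1 p.2.2))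
    (hPr : ContDiff ℝ 2 (fun p : ℝ × ℝ × ℝ => Pr p.1 p.2.1 p.2.2))
    (hpos : ∀ t x y, 0 < ρ t x y)
    (htransρ : ∀ t x y,
      pt ρ t x y + u1 t x y * p1 ρ t x y + u2 t x y * p2 ρ t x y = 0)
    (hmom1 : ∀ t x y,
      ρ t x y * (pt u1 t x y + u1 t x y * p1 u1 t x y + u2 t x y * p2 u1 t x y)
        + p1 Pr t x y = 0)
    (hmom2 : ∀ t x y,
      ρ t x y * (pt u2 t x y + u1 t x y * p1 u2 t x y + u2 t x y * p2 u2 t x y)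
        + p2 Pr t x y = 0)
    (hdiv : ∀ t x y, p1 u1 t x y + p2 u2 t x y = 0)
    (η : ℝ → ℝ → ℝ → ℝ)
    (hη : ∀ t x y, η t x y =
      p1 (fun t x y => ρ t x y * u2 t x y) t x y -
      p2 (fun t x y => ρ t x y * u1 t x y) t x y)
    (X1 X2 : ℝ → ℝ → ℝ → ℝ)
    (hX1 : ∀ t x y, X1 t x y = -(p2 ρ t x y))
    (hX2 : ∀ t x y, X2 t x y = p1 ρ t x y) :
    ∀ t x y, 0 ≤ t →
      (pt η t x y + u1 t x y * p1 η t x y + u2 t x y * p2 η t x y =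
        (X1 t x y * p1 u1 t x y + X2 t x y * p2 u1 t x y) * u1 t x y +
        (X1 t x y * p1 u2 t x y + X2 t x y * p2 u2 t x y) * u2 t x y) ∧
      ((X1 t x y * p1 u1 t x y + X2 t x y * p2 u1 t x y) * u1 t x y +
        (X1 t x y * p1 u2 t x y + X2 t x y * p2 u2 t x y) * u2 t x y =
        (1 / 2) *
          (X1 t x y * p1 (fun t a b => (u1 t a b) ^ 2 + (u2 t a b) ^ 2) t x y +
            X2 t x y * p2 (fun t a b => (u1 t a b) ^ 2 + (u2 t a b) ^ 2) t x y)) :=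
  stmt11_general ρ u1 u2 Pr hρ hu1 hu2 hPr htransρ hmom1 hmom2 hdiv η hη X1 X2 hX1 hX2
end
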